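/- For the three-parameter qubit model, with block-diagonal weight W(3) = diag(W, w₃), the quantity TrAbs(W(3)·Im G̃(3)⁻¹) equals 2√(w₃ g³³)·√(Tr(W(G⁻¹ − G̃⁻¹))), where g³³ = 1/θ₁², G⁻¹ = (1−θ₁², −θ₁θ₂; −θ₁θ₂, 1−θ₂²), G̃⁻¹ = (1−θ₁²−θ₂²)I₂, and Im G̃(3)⁻¹ has entries (1,3) = −θ₂/θ₁, (2,3) = 1, (3,1) = θ₂/θ₁, (3,2) = −1, zeros elsewhere. -/

import Mathlib

/-!
`Im G̃(3)⁻¹` is antisymmetric, hence so is `C = √W(3) · Im G̃(3)⁻¹ · √W(3)`. A real antisymmetric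
`3 × 3` matrix has eigenvalues `0, ±iμ` with `μ² = -tr(C²)/2`, so `C³ = -μ² C`; then `-C²/μ` is
positive semidefinite with square `-C²`, i.e. it is `√(-C²)`, and its trace is `2μ`. Finally,
`tr(C²) = tr(W(3) A W(3) A)` for `A = Im G̃(3)⁻¹`, and a direct computation gives
`-2 w₃ θ₁⁻² (θ₂, -θ₁) W (θ₂, -θ₁)ᵀ`.
-/

open Matrix

/-- The square root of a positive semidefinite matrix, with the definition it had in
Mathlib (December 2024), where it was `Matrix.PosSemidef.sqrt`; it has since been removed. -/
noncomputable def Matrix.PosSemidef.sqrt {n 𝕜 : Type*} [Fintype n] [RCLike 𝕜] [PartialOrder 𝕜]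
    [DecidableEq n]
    {A : Matrix n n 𝕜} (hA : A.PosSemidef) : Matrix n n 𝕜 :=
  (hA.1.eigenvectorUnitary : Matrix n n 𝕜) *
    diagonal (fun i => ((√(hA.1.eigenvalues i) : ℝ) : 𝕜)) *
    (star hA.1.eigenvectorUnitary : Matrix n n 𝕜)

/-- The antisymmetric matrix `Im G̃(3)⁻¹`. -/
noncomputable def imRld3 (θ₁ θ₂ : ℝ) : Matrix (Fin 3) (Fin 3) ℝ :=
  !![0, 0, -(θ₂ / θ₁); 0, 0, 1; θ₂ / θ₁, -1, 0]

namespace Matrix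

open scoped MatrixOrder

section Sqrt

variable {n : Type*} [Fintype n] [DecidableEq n]

lemma PosSemidef.sqrt_eq_cfcSqrt {A : Matrix n n ℝ} (hA : A.PosSemidef) :
    hA.sqrt = CFC.sqrt A := by
  rw [CFC.sqrt_eq_real_sqrt A hA.nonneg, cfcₙ_eq_cfc, IsHermitian.cfc_eq hA.1]
  rfl

lemma PosSemidef.sqrt_mul_sqrt {A : Matrix n n ℝ} (hA : A.PosSemidef) :
    hA.sqrt * hA.sqrt = A := by
  rw [hA.sqrt_eq_cfcSqrt]
  exact CFC.sqrt_mul_sqrt_self A hA.nonneg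

lemma PosSemidef.transpose_sqrt {A : Matrix n n ℝ} (hA : A.PosSemidef) :
    hA.sqrtᵀ = hA.sqrt := by
  rw [← conjTranspose_eq_transpose_of_trivial, hA.sqrt_eq_cfcSqrt]
  exact (nonneg_iff_posSemidef.mp (CFC.sqrt_nonneg A)).1

lemma PosSemidef.eq_sqrt_of_mul_self_eq {A S : Matrix n n ℝ} (hA : A.PosSemidef)
    (hS : S.PosSemidef) (h : S * S = A) : S = hA.sqrt := by
  rw [hA.sqrt_eq_cfcSqrt]
  exact (CFC.sqrt_unique h hS.nonneg).symm

lemma PosSemidef.sqrt_neg_mul_self_eq {C : Matrix n n ℝ} (hB : (-(C * C)).PosSemidef) {μ : ℝ}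
    (hμ : 0 < μ) (hC : C * C * C = -μ ^ 2 • C) : hB.sqrt = μ⁻¹ • -(C * C) := by
  refine (hB.eq_sqrt_of_mul_self_eq (hB.smul (inv_nonneg.mpr hμ.le)) ?_).symm
  have h4 : C * C * (C * C) = -μ ^ 2 • (C * C) := by
    rw [← Matrix.mul_assoc, hC, smul_mul]
  rw [smul_mul_smul_comm, neg_mul_neg, h4, smul_smul, ← neg_one_smul ℝ (C * C)]
  congr 1
  field_simp

end Sqrt

lemma trace_conj_mul_self {n R : Type*} [Fintype n] [CommRing R] (S A : Matrix n n R) :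
    (S * A * S * (S * A * S)).trace = (S * S * A * (S * S) * A).trace := by
  rw [show S * A * S * (S * A * S) = S * (A * (S * S) * A * S) by noncomm_ring, trace_mul_comm,
    show A * (S * S) * A * S * S = A * (S * S) * A * (S * S) by noncomm_ring, trace_mul_comm]
  noncomm_ring

lemma cube_eq_of_transpose_eq_neg {K : Type*} [Field K] [CharZero K]
    {C : Matrix (Fin 3) (Fin 3) K} (hC : Cᵀ = -C) :
    C * C * C = ((C * C).trace / 2) • C := by
  have hswap : ∀ i j, C j i = -C i j := fun i j => by simpa using congrFun (congrFun hC i) j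
  have hdiag : ∀ i, C i i = 0 := fun i => self_eq_neg.mp (hswap i i)
  have hC3 : C = !![0, C 0 1, C 0 2; -C 0 1, 0, C 1 2; -C 0 2, -C 1 2, 0] := by
    conv_lhs => rw [eta_fin_three C, hdiag 0, hdiag 1, hdiag 2, hswap 0 1, hswap 0 2, hswap 1 2]
  rw [hC3]
  ext i j
  fin_cases i <;> fin_cases j <;> simp [trace, mul_apply, Fin.sum_univ_succ] <;> ring

lemma trace_sqrt_neg_mul_self_of_transpose_eq_neg {C : Matrix (Fin 3) (Fin 3) ℝ} (hC : Cᵀ = -C)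
    (hB : (-(C * C)).PosSemidef) : hB.sqrt.trace = 2 * √(-(C * C).trace / 2) := by
  rcases hB.trace_nonneg.eq_or_lt with htr | htr
  · have hzero : -(C * C) = 0 := hB.trace_eq_zero_iff.mp htr.symm
    rw [← trace_neg, ← htr, hB.sqrt_eq_cfcSqrt, hzero, CFC.sqrt_zero]
    simp
  · set μ := √(-(C * C).trace / 2)
    have hμ : 0 < μ := Real.sqrt_pos.mpr (by rw [trace_neg] at htr; linarith)
    have hμsq : μ ^ 2 = -(C * C).trace / 2 := Real.sq_sqrt (by rw [trace_neg] at htr; linarith)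
    have hcube : C * C * C = -μ ^ 2 • C := by
      rw [cube_eq_of_transpose_eq_neg hC, hμsq]
      congr 1
      ring
    rw [hB.sqrt_neg_mul_self_eq hμ hcube, trace_smul, smul_eq_mul, trace_neg,
      show -(C * C).trace = 2 * μ ^ 2 by linarith]
    field_simp

end Matrix

lemma imRld3_transpose (θ₁ θ₂ : ℝ) : (imRld3 θ₁ θ₂)ᵀ = -imRld3 θ₁ θ₂ := by
  ext i j
  fin_cases i <;> fin_cases j <;> simp [imRld3]

lemma trace_blockWeight_mul_imRld3_sq {θ₁ : ℝ} (θ₂ : ℝ) (hθ₁ : θ₁ ≠ 0)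
    (W : Matrix (Fin 2) (Fin 2) ℝ) (w₃ : ℝ) :
    (!![W 0 0, W 0 1, 0; W 1 0, W 1 1, 0; 0, 0, w₃] * imRld3 θ₁ θ₂ *
        !![W 0 0, W 0 1, 0; W 1 0, W 1 1, 0; 0, 0, w₃] * imRld3 θ₁ θ₂).trace =
      -2 * (w₃ * (1 / θ₁ ^ 2)) *
        (W * ((!![1 - θ₁ ^ 2, -(θ₁ * θ₂); -(θ₁ * θ₂), 1 - θ₂ ^ 2] : Matrix (Fin 2) (Fin 2) ℝ) -
          (1 - θ₁ ^ 2 - θ₂ ^ 2) • (1 : Matrix (Fin 2) (Fin 2) ℝ))).trace := by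
  simp [imRld3, trace, mul_apply, Fin.sum_univ_succ, one_apply]
  field_simp
  ring

theorem stmt16_general (θ₁ θ₂ : ℝ) (h1 : θ₁ ≠ 0)
    (W : Matrix (Fin 2) (Fin 2) ℝ) (w₃ : ℝ) (hw : 0 < w₃)
    (hW3 : (!![W 0 0, W 0 1, 0; W 1 0, W 1 1, 0; 0, 0, w₃] :
      Matrix (Fin 3) (Fin 3) ℝ).PosDef)
    (hB : (-(hW3.posSemidef.sqrt * imRld3 θ₁ θ₂ * hW3.posSemidef.sqrt *
      (hW3.posSemidef.sqrt * imRld3 θ₁ θ₂ * hW3.posSemidef.sqrt))).PosSemidef) :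
    hB.sqrt.trace =
      2 * Real.sqrt (w₃ * (1 / θ₁ ^ 2)) *
        Real.sqrt ((W * ((!![1 - θ₁ ^ 2, -(θ₁ * θ₂); -(θ₁ * θ₂), 1 - θ₂ ^ 2] :
            Matrix (Fin 2) (Fin 2) ℝ) -
          (1 - θ₁ ^ 2 - θ₂ ^ 2) • (1 : Matrix (Fin 2) (Fin 2) ℝ))).trace) := by
  set R := hW3.posSemidef.sqrt
  set A := imRld3 θ₁ θ₂
  have hskew : (R * A * R)ᵀ = -(R * A * R) := by
    simp only [transpose_mul, hW3.posSemidef.transpose_sqrt, R, A, imRld3_transpose,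
      mul_neg, neg_mul, Matrix.mul_assoc]
  have htrace : (R * A * R * (R * A * R)).trace =
      (!![W 0 0, W 0 1, 0; W 1 0, W 1 1, 0; 0, 0, w₃] * A *
        !![W 0 0, W 0 1, 0; W 1 0, W 1 1, 0; 0, 0, w₃] * A).trace := by
    rw [trace_conj_mul_self, hW3.posSemidef.sqrt_mul_sqrt]
  rw [trace_sqrt_neg_mul_self_of_transpose_eq_neg hskew hB, htrace,
    trace_blockWeight_mul_imRld3_sq θ₂ h1,
    mul_assoc 2, ← Real.sqrt_mul (by positivity)]
  congr 2
  ring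

/-- For the three-parameter qubit model with block-diagonal weight
`W(3) = diag(W, w₃)`, with `TrAbs` computed as `Tr √(−B²)` for
`B = √W(3) · Im G̃(3)⁻¹ · √W(3)`, one has
`TrAbs(W(3)·Im G̃(3)⁻¹) = 2√(w₃ g³³)·√(Tr(W(G⁻¹ − G̃⁻¹)))` with `g³³ = 1/θ₁²`,
`G⁻¹ = (1−θ₁², −θ₁θ₂; −θ₁θ₂, 1−θ₂²)` and `G̃⁻¹ = (1−θ₁²−θ₂²)I₂`. -/
theorem stmt16 (θ₁ θ₂ : ℝ) (h1 : θ₁ ≠ 0) (h : θ₁ ^ 2 + θ₂ ^ 2 < 1)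
    (W : Matrix (Fin 2) (Fin 2) ℝ) (hW : W.PosDef) (w₃ : ℝ) (hw : 0 < w₃)
    (hW3 : (!![W 0 0, W 0 1, 0; W 1 0, W 1 1, 0; 0, 0, w₃] :
      Matrix (Fin 3) (Fin 3) ℝ).PosDef)
    (hB : (-(hW3.posSemidef.sqrt * imRld3 θ₁ θ₂ * hW3.posSemidef.sqrt *
      (hW3.posSemidef.sqrt * imRld3 θ₁ θ₂ * hW3.posSemidef.sqrt))).PosSemidef) :
    hB.sqrt.trace =
      2 * Real.sqrt (w₃ * (1 / θ₁ ^ 2)) *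
        Real.sqrt ((W * ((!![1 - θ₁ ^ 2, -(θ₁ * θ₂); -(θ₁ * θ₂), 1 - θ₂ ^ 2] :
            Matrix (Fin 2) (Fin 2) ℝ) -
          (1 - θ₁ ^ 2 - θ₂ ^ 2) • (1 : Matrix (Fin 2) (Fin 2) ℝ))).trace) :=
  stmt16_general θ₁ θ₂ h1 W w₃ hw hW3 hB
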